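/- arXiv:2509.07639 — 11 statements merged into one kernel-verified Lean document; each statement's English description precedes it below -/
import Mathlib

section
/- For every real δ with 0 ≤ δ < 1/2 and h(δ) < 1/2, there exists a natural number N such that for every even n ≥ N there exists an F₂-linear code C ⊆ F₂ⁿ of dimension n/2 with the property that every nonzero codeword of C has Hamming weight at least δ·n, and every nonzero element of the dual code C⊥ also has Hamming weight at least δ·n. -/
/-- Binary entropy function (base-2 logs), with the convention `0 * log 0 = 0`. -/
noncomputable def binEnt (x : ℝ) : ℝ :=
  -(x * Real.logb 2 x) - (1 - x) * Real.logb 2 (1 - x)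

/-!
Consider the systematic codes `C_A = {(u, u A)}` of length `2k` and dimension `k`, for
`A ∈ M_k(𝔽₂)`; their duals are `C_A⊥ = {(y, w) : A w = -y}`. A fixed nonzero word lies in `C_A`
for at most a `2^(-k)` fraction of the matrices `A` (one row of `A` is forced by the others),
and likewise for `C_A⊥` (one column is forced). Comparing with the binomial mass
`δ^wt (1-δ)^(n-wt)`, at most `2^(h(δ) n)` words have weight below `δ n`. Since `h(δ) < 1/2`,
`2 · 2^(2 h(δ) k) < 2^k` for large `k`, and the union bound leaves a matrix `A` for which
neither `C_A` nor `C_A⊥` contains a nonzero word of weight below `δ n`.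
-/

open Finset Matrix Filter

section HammingBall

variable {ι : Type*} [Fintype ι]

theorem prod_ite_eq_zero_eq_pow_hammingNorm_mul_pow {R : Type*} [CommMonoid R] (a b : R)
    (x : ι → ZMod 2) :
    ∏ i, (if x i = 0 then b else a) = a ^ hammingNorm x * b ^ (Fintype.card ι - hammingNorm x) := by
  have hcard := card_filter_add_card_filter_not (s := univ) (fun i => x i ≠ 0)
  rw [card_univ] at hcard
  rw [prod_ite, prod_const, prod_const, mul_comm]
  simp only [hammingNorm, ne_eq, not_not] at hcard ⊢
  congr 2
  omega

theorem sum_pow_hammingNorm_mul_pow [DecidableEq ι] {R : Type*} [CommSemiring R] (a b : R) :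
    ∑ x : ι → ZMod 2, a ^ hammingNorm x * b ^ (Fintype.card ι - hammingNorm x) =
      (a + b) ^ Fintype.card ι := by
  rw [← sum_congr rfl fun x _ => prod_ite_eq_zero_eq_pow_hammingNorm_mul_pow a b x,
    ← Fintype.prod_sum (fun _ c => if c = 0 then b else a)]
  have hsum : ∑ c : ZMod 2, (if c = 0 then b else a) = a + b := by
    rw [show (univ : Finset (ZMod 2)) = {0, 1} from rfl]
    simp [add_comm]
  rw [hsum, prod_const, card_univ]

theorem rpow_neg_binEnt_mul_le {p : ℝ} (hp0 : 0 ≤ p) (hp : p ≤ 1 / 2) {m n : ℕ}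
    (hm : (m : ℝ) ≤ p * n) : (2 : ℝ) ^ (-(binEnt p * n)) ≤ p ^ m * (1 - p) ^ (n - m) := by
  rcases hp0.eq_or_lt with rfl | hp0
  · obtain rfl : m = 0 := by
      exact_mod_cast (by simpa using hm : (m : ℝ) ≤ 0).antisymm m.cast_nonneg
    simp [binEnt]
  have hq : 0 < 1 - p := by linarith
  have hmn : m ≤ n := by exact_mod_cast (by nlinarith : (m : ℝ) ≤ n)
  have hlog : Real.log p ≤ Real.log (1 - p) := Real.log_le_log hp0 (by linarith)
  rw [← Real.log_le_log_iff (by positivity) (by positivity), Real.log_rpow two_pos,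
    Real.log_mul (by positivity) (by positivity), Real.log_pow, Real.log_pow, Nat.cast_sub hmn]
  unfold binEnt
  simp only [Real.logb]
  field_simp
  -- the difference of the two sides is `(p n - m) (log (1 - p) - log p)`
  nlinarith [mul_nonneg (sub_nonneg.2 hm) (sub_nonneg.2 hlog)]

theorem card_filter_hammingNorm_le_le [DecidableEq ι] {p : ℝ} (hp0 : 0 ≤ p) (hp : p ≤ 1 / 2) :
    (#{x : ι → ZMod 2 | (hammingNorm x : ℝ) ≤ p * Fintype.card ι} : ℝ) ≤
      2 ^ (binEnt p * Fintype.card ι) := by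
  set n := Fintype.card ι
  set S : Finset (ι → ZMod 2) := {x | (hammingNorm x : ℝ) ≤ p * n}
  have hmass : #S * (2 : ℝ) ^ (-(binEnt p * n)) ≤ 1 :=
    calc #S * (2 : ℝ) ^ (-(binEnt p * n))
        = ∑ x ∈ S, (2 : ℝ) ^ (-(binEnt p * n)) := by rw [sum_const, nsmul_eq_mul]
      _ ≤ ∑ x ∈ S, p ^ hammingNorm x * (1 - p) ^ (n - hammingNorm x) :=
          sum_le_sum fun x hx => rpow_neg_binEnt_mul_le hp0 hp (mem_filter.1 hx).2
      _ ≤ ∑ x : ι → ZMod 2, p ^ hammingNorm x * (1 - p) ^ (n - hammingNorm x) :=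
          sum_le_sum_of_subset_of_nonneg (filter_subset _ _) fun _ _ _ =>
            mul_nonneg (pow_nonneg hp0 _) (pow_nonneg (by linarith) _)
      _ = 1 := by rw [sum_pow_hammingNorm_mul_pow, add_sub_cancel, one_pow]
  rwa [Real.rpow_neg zero_le_two, ← div_eq_mul_inv, div_le_one (by positivity)] at hmass

end HammingBall

theorem eq_zero_of_comp_castAdd_of_comp_natAdd {α : Type*} [Zero α] {m n : ℕ}
    {x : Fin (m + n) → α} (hl : x ∘ Fin.castAdd n = 0) (hr : x ∘ Fin.natAdd m = 0) : x = 0 := by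
  rw [← Fin.append_castAdd_natAdd (f := x)]
  ext i
  refine Fin.addCases (fun j => ?_) (fun j => ?_) i
  · simpa using congrFun hl j
  · simpa [-Fin.natAdd_eq_addNat] using congrFun hr j

section SystematicCode

variable {F : Type*} [Field F] {k : ℕ}

def systematicEncoder (A : Matrix (Fin k) (Fin k) F) : (Fin k → F) →ₗ[F] (Fin (k + k) → F) where
  toFun u := Fin.append u (u ᵥ* A)
  map_add' u v := by
    ext i
    refine Fin.addCases (fun j => ?_) (fun j => ?_) i <;>
      simp [add_vecMul, -Fin.natAdd_eq_addNat]
  map_smul' c u := by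
    ext i
    refine Fin.addCases (fun j => ?_) (fun j => ?_) i <;>
      simp [smul_vecMul, -Fin.natAdd_eq_addNat]

theorem systematicEncoder_apply (A : Matrix (Fin k) (Fin k) F) (u : Fin k → F) :
    systematicEncoder A u = Fin.append u (u ᵥ* A) := rfl

def systematicCode (A : Matrix (Fin k) (Fin k) F) : Submodule F (Fin (k + k) → F) :=
  LinearMap.range (systematicEncoder A)

theorem systematicEncoder_injective (A : Matrix (Fin k) (Fin k) F) :
    Function.Injective (systematicEncoder A) := fun u v h =>
  funext fun i => by simpa [systematicEncoder_apply] using congrFun h (Fin.castAdd k i)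

theorem finrank_systematicCode (A : Matrix (Fin k) (Fin k) F) :
    Module.finrank F (systematicCode A) = k := by
  rw [systematicCode, LinearMap.finrank_range_of_inj (systematicEncoder_injective A),
    Module.finrank_fin_fun]

theorem mem_systematicCode_iff {A : Matrix (Fin k) (Fin k) F} {x : Fin (k + k) → F} :
    x ∈ systematicCode A ↔ (x ∘ Fin.castAdd k) ᵥ* A = x ∘ Fin.natAdd k := by
  constructor
  · rintro ⟨u, rfl⟩
    ext j
    simp [systematicEncoder_apply, Function.comp_def, -Fin.natAdd_eq_addNat]
  · intro h
    refine ⟨x ∘ Fin.castAdd k, ?_⟩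
    rw [systematicEncoder_apply, h]
    exact Fin.append_castAdd_natAdd

theorem dotProduct_systematicEncoder (A : Matrix (Fin k) (Fin k) F) (x : Fin (k + k) → F)
    (u : Fin k → F) :
    x ⬝ᵥ systematicEncoder A u = u ⬝ᵥ (x ∘ Fin.castAdd k + A *ᵥ (x ∘ Fin.natAdd k)) := by
  rw [dotProduct_add, dotProduct_mulVec, dotProduct, Fin.sum_univ_add]
  simp [systematicEncoder_apply, dotProduct, mul_comm, -Fin.natAdd_eq_addNat]

theorem forall_dotProduct_systematicCode_eq_zero_iff {A : Matrix (Fin k) (Fin k) F}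
    {x : Fin (k + k) → F} :
    (∀ c ∈ systematicCode A, x ⬝ᵥ c = 0) ↔ A *ᵥ (x ∘ Fin.natAdd k) = -(x ∘ Fin.castAdd k) := by
  simp only [systematicCode, LinearMap.mem_range, forall_exists_index, forall_apply_eq_imp_iff,
    dotProduct_systematicEncoder]
  simp_rw [dotProduct_comm _ (x ∘ Fin.castAdd k + _), dotProduct_eq_zero_iff,
    add_eq_zero_iff_eq_neg']

end SystematicCode

section MatrixCounting

variable {F m n : Type*} [Field F] [Fintype F] [DecidableEq F]
  [Fintype m] [Fintype n] [DecidableEq m] [DecidableEq n]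

theorem card_filter_vecMul_eq_le {u : m → F} (hu : u ≠ 0) (w : n → F) :
    #{A : Matrix m n F | u ᵥ* A = w} ≤
      Fintype.card F ^ ((Fintype.card m - 1) * Fintype.card n) := by
  obtain ⟨i₀, hi₀⟩ := Function.ne_iff.mp hu
  have hinj : Set.InjOn (fun (A : Matrix m n F) (i : {i // i ≠ i₀}) => A i)
      {A | u ᵥ* A = w} := by
    intro A hA A' hA' hrows
    ext i j
    by_cases hi : i = i₀
    · subst hi
      have hoff : ∀ i' ≠ i, A i' j - A' i' j = 0 := fun i' hi' =>
        sub_eq_zero.2 (congrFun (congrFun hrows ⟨i', hi'⟩) j)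
      have hzero : u ᵥ* (A - A') = 0 := by
        rw [vecMul_sub, sub_eq_zero]
        exact hA.trans hA'.symm
      have hsum : ∑ i', u i' * (A i' j - A' i' j) = 0 := congrFun hzero j
      rw [sum_eq_single i (fun i' _ hi' => by rw [hoff i' hi', mul_zero]) (by simp)] at hsum
      exact sub_eq_zero.1 ((mul_eq_zero.1 hsum).resolve_left hi₀)
    · exact congrFun (congrFun hrows ⟨i, hi⟩) j
  calc #{A : Matrix m n F | u ᵥ* A = w}
      ≤ #(univ : Finset ({i // i ≠ i₀} → n → F)) :=
        card_le_card_of_injOn _ (fun _ _ => mem_univ _) (by simpa using hinj)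
    _ = Fintype.card F ^ ((Fintype.card m - 1) * Fintype.card n) := by
        simp [Fintype.card_subtype_compl, ← pow_mul, mul_comm]

theorem card_filter_mulVec_eq_le {w : n → F} (hw : w ≠ 0) (v : m → F) :
    #{A : Matrix m n F | A *ᵥ w = v} ≤
      Fintype.card F ^ ((Fintype.card n - 1) * Fintype.card m) := by
  rw [card_equiv (transposeAddEquiv m n F).toEquiv (t := {B | w ᵥ* B = v})
    (by simp [vecMul_transpose])]
  exact card_filter_vecMul_eq_le hw v

end MatrixCounting

section SystematicCodeCounting

variable {F : Type*} [Field F] [Fintype F] [DecidableEq F] {k : ℕ}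

open scoped Classical in
theorem card_filter_mem_systematicCode_le {x : Fin (k + k) → F} (hx : x ≠ 0) :
    #{A : Matrix (Fin k) (Fin k) F | x ∈ systematicCode A} ≤ Fintype.card F ^ ((k - 1) * k) := by
  simp_rw [mem_systematicCode_iff]
  by_cases hl : x ∘ Fin.castAdd k = 0
  · have hr : x ∘ Fin.natAdd k ≠ 0 := fun hr => hx (eq_zero_of_comp_castAdd_of_comp_natAdd hl hr)
    simp [hl, Ne.symm hr]
  · simpa using card_filter_vecMul_eq_le hl (x ∘ Fin.natAdd k)

open scoped Classical in
theorem card_filter_forall_dotProduct_systematicCode_le {x : Fin (k + k) → F} (hx : x ≠ 0) :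
    #{A : Matrix (Fin k) (Fin k) F | ∀ c ∈ systematicCode A, x ⬝ᵥ c = 0} ≤
      Fintype.card F ^ ((k - 1) * k) := by
  simp_rw [forall_dotProduct_systematicCode_eq_zero_iff]
  by_cases hr : x ∘ Fin.natAdd k = 0
  · have hl : x ∘ Fin.castAdd k ≠ 0 := fun hl => hx (eq_zero_of_comp_castAdd_of_comp_natAdd hl hr)
    simp [hr, hl]
  · simpa using card_filter_mulVec_eq_le hr (-(x ∘ Fin.castAdd k))

end SystematicCodeCounting

theorem exists_forall_not_of_card_mul_lt {α β : Type*} [Fintype α] (S : Finset β)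
    (P : α → β → Prop) [∀ a b, Decidable (P a b)] {t : ℕ} (ht : ∀ b ∈ S, #{a | P a b} ≤ t)
    (hlt : #S * t < Fintype.card α) : ∃ a, ∀ b ∈ S, ¬ P a b := by
  classical
  by_contra! h
  have hcover : (univ : Finset α) ⊆ S.biUnion fun b => {a | P a b} := fun a _ => by
    obtain ⟨b, hb, hab⟩ := h a
    exact mem_biUnion.2 ⟨b, hb, by simpa using hab⟩
  have := (card_le_card hcover).trans (card_biUnion_le_card_mul S _ t ht)
  rw [card_univ] at this
  omega

theorem exists_systematicCode_hammingNorm_ge {δ : ℝ} (hδ0 : 0 ≤ δ) (hδ : δ ≤ 1 / 2) {k : ℕ}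
    (hk : 2 * (2 : ℝ) ^ (binEnt δ * (k + k : ℕ)) < 2 ^ k) :
    ∃ A : Matrix (Fin k) (Fin k) (ZMod 2),
      (∀ c ∈ systematicCode A, c ≠ 0 → δ * (k + k : ℕ) ≤ (hammingNorm c : ℝ)) ∧
      (∀ x : Fin (k + k) → ZMod 2,
        (∀ c ∈ systematicCode A, x ⬝ᵥ c = 0) → x ≠ 0 → δ * (k + k : ℕ) ≤ (hammingNorm x : ℝ)) := by
  classical
  set S : Finset (Fin (k + k) → ZMod 2) := {x | x ≠ 0 ∧ (hammingNorm x : ℝ) < δ * (k + k : ℕ)}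
  have hS : (#S : ℝ) ≤ 2 ^ (binEnt δ * (k + k : ℕ)) := by
    have hball := card_filter_hammingNorm_le_le (ι := Fin (k + k)) hδ0 hδ
    rw [Fintype.card_fin] at hball
    refine le_trans ?_ hball
    exact_mod_cast card_le_card fun x hx => by
      simp only [S, mem_filter] at hx ⊢
      exact ⟨hx.1, hx.2.2.le⟩
  have hbad : ∀ x ∈ S, #{A : Matrix (Fin k) (Fin k) (ZMod 2) |
      x ∈ systematicCode A ∨ ∀ c ∈ systematicCode A, x ⬝ᵥ c = 0} ≤ 2 * 2 ^ ((k - 1) * k) :=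
    fun x hx => by
      have hx0 := (mem_filter.1 hx).2.1
      rw [filter_or, two_mul]
      exact (card_union_le _ _).trans (add_le_add (card_filter_mem_systematicCode_le hx0)
        (card_filter_forall_dotProduct_systematicCode_le hx0))
  have hcard : #S * (2 * 2 ^ ((k - 1) * k)) < Fintype.card (Matrix (Fin k) (Fin k) (ZMod 2)) := by
    have hsplit : k * k = k + (k - 1) * k := by
      rw [Nat.sub_one_mul]
      have := Nat.le_mul_self k
      omega
    have : (#S * 2 : ℝ) < 2 ^ k := by linarith
    rw [show Fintype.card (Matrix (Fin k) (Fin k) (ZMod 2)) = 2 ^ (k * k) by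
      rw [Fintype.card_congr (Matrix.of (m := Fin k) (n := Fin k) (α := ZMod 2)).symm]
      simp [← pow_mul],
      hsplit, pow_add, ← mul_assoc]
    exact Nat.mul_lt_mul_of_pos_right (by exact_mod_cast this) (by positivity)
  obtain ⟨A, hA⟩ := exists_forall_not_of_card_mul_lt S
    (fun A x => x ∈ systematicCode A ∨ ∀ c ∈ systematicCode A, x ⬝ᵥ c = 0) hbad hcard
  refine ⟨A, fun c hc hc0 => ?_, fun x hx hx0 => ?_⟩ <;> by_contra! hlt
  · exact hA c (mem_filter.2 ⟨mem_univ c, hc0, hlt⟩) (Or.inl hc)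
  · exact hA x (mem_filter.2 ⟨mem_univ x, hx0, hlt⟩) (Or.inr hx)

theorem eventually_two_mul_rpow_lt_two_pow {c : ℝ} (hc : c < 1 / 2) :
    ∀ᶠ k : ℕ in atTop, 2 * (2 : ℝ) ^ (c * (k + k : ℕ)) < 2 ^ k := by
  have hlin : Tendsto (fun k : ℕ => (1 - 2 * c) * (k : ℝ)) atTop atTop :=
    tendsto_natCast_atTop_atTop.const_mul_atTop (by linarith)
  filter_upwards [hlin.eventually_gt_atTop 1] with k hk
  calc 2 * (2 : ℝ) ^ (c * (k + k : ℕ)) = 2 ^ (1 + c * (k + k : ℕ)) := by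
        rw [Real.rpow_add two_pos, Real.rpow_one]
    _ < 2 ^ (k : ℝ) := Real.rpow_lt_rpow_of_exponent_lt one_lt_two (by push_cast; linarith)
    _ = 2 ^ k := Real.rpow_natCast 2 k

/-- For every real `δ` with `0 ≤ δ < 1/2` and `h(δ) < 1/2`, for all large enough even `n`
there is a rate-`1/2` binary linear code `C ≤ 𝔽₂ⁿ` such that both `C` and its dual have
minimum (absolute) distance at least `δ·n`. -/
theorem fast_good_code_with_fast_good_dual_distance
    (δ : ℝ) (hδ0 : 0 ≤ δ) (hδhalf : δ < 1 / 2) (hδent : binEnt δ < 1 / 2) :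
    ∃ N : ℕ, ∀ n : ℕ, N ≤ n → Even n →
      ∃ C : Submodule (ZMod 2) (Fin n → ZMod 2),
        Module.finrank (ZMod 2) C = n / 2 ∧
        (∀ c ∈ C, c ≠ 0 → δ * n ≤ (hammingNorm c : ℝ)) ∧
        (∀ x : Fin n → ZMod 2,
          (∀ c ∈ C, ∑ i, x i * c i = 0) → x ≠ 0 → δ * n ≤ (hammingNorm x : ℝ)) := by
  obtain ⟨K, hK⟩ := eventually_atTop.1 (eventually_two_mul_rpow_lt_two_pow hδent)
  refine ⟨K + K, fun n hn ⟨k, hnk⟩ => ?_⟩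
  subst hnk
  obtain ⟨A, hcode, hdual⟩ :=
    exists_systematicCode_hammingNorm_ge hδ0 hδhalf.le (hK k (by omega))
  exact ⟨systematicCode A, by rw [finrank_systematicCode]; omega, hcode, hdual⟩
end

section
/- Let n be even, m ≥ 1, and let π₁,…,π_{2m} be permutations of {1,…,n}. Over F₂ = ZMod 2, define the n×n accumulator matrix A by A(i,j) = 1 iff j ≤ i, the n×n discrete derivative matrix D by D(i,j) = 1 iff i = j or i = j+1, the n×(n/2) repetition matrix F by F(i,j) = 1 iff j = ⌊i/2⌋ (0-indexed: rows 2j and 2j+1 have a 1 in column j), and for a permutation π the n×n permutation matrix M_π by M_π(i,j) = 1 iff π(i) = j. Set G = A·M_{π_{2m}}·D·M_{π_{2m−1}}···A·M_{π₂}·D·M_{π₁}·F and H = Dᵀ·M_{π_{2m}}·Aᵀ·M_{π_{2m−1}}···Dᵀ·M_{π₂}·Aᵀ·M_{π₁}·F. Then Hᵀ·G = 0 (the zero (n/2)×(n/2) matrix); in particular G and H generate dual codes. -/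
open Matrix

/-- The `n × n` accumulator matrix over `𝔽₂`: `A i j = 1` iff `j ≤ i`. -/
def accMat (n : ℕ) : Matrix (Fin n) (Fin n) (ZMod 2) :=
  Matrix.of fun i j => if j ≤ i then 1 else 0

/-- The `n × n` discrete-derivative matrix over `𝔽₂`: `D i j = 1` iff `i = j` or `i = j + 1`. -/
def derMat (n : ℕ) : Matrix (Fin n) (Fin n) (ZMod 2) :=
  Matrix.of fun i j => if (i : ℕ) = (j : ℕ) ∨ (i : ℕ) = (j : ℕ) + 1 then 1 else 0

/-- The `n × (n/2)` repetition matrix over `𝔽₂` (0-indexed): rows `2j` and `2j+1` have a `1`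
in column `j`, i.e. `F i j = 1` iff `j = ⌊i/2⌋`. -/
def repMat (n : ℕ) : Matrix (Fin n) (Fin (n / 2)) (ZMod 2) :=
  Matrix.of fun i j => if (j : ℕ) = (i : ℕ) / 2 then 1 else 0

/-- The permutation matrix of `π`: `M_π i j = 1` iff `π i = j`. -/
def permMat {n : ℕ} (π : Equiv.Perm (Fin n)) : Matrix (Fin n) (Fin n) (ZMod 2) :=
  Matrix.of fun i j => if π i = j then 1 else 0

/-- The product of the first `k` rounds `A·M_{π_{2k}}·D·M_{π_{2k-1}} ⋯ A·M_{π_2}·D·M_{π_1}`. -/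
def roundsAD (n : ℕ) (π : ℕ → Equiv.Perm (Fin n)) : ℕ → Matrix (Fin n) (Fin n) (ZMod 2)
  | 0 => 1
  | k + 1 =>
      accMat n * permMat (π (2 * k + 2)) * derMat n * permMat (π (2 * k + 1)) * roundsAD n π k

/-- The product of the first `k` rounds `Dᵀ·M_{π_{2k}}·Aᵀ·M_{π_{2k-1}} ⋯ Dᵀ·M_{π_2}·Aᵀ·M_{π_1}`. -/
def roundsDA (n : ℕ) (π : ℕ → Equiv.Perm (Fin n)) : ℕ → Matrix (Fin n) (Fin n) (ZMod 2)
  | 0 => 1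
  | k + 1 =>
      (derMat n)ᵀ * permMat (π (2 * k + 2)) * (accMat n)ᵀ * permMat (π (2 * k + 1)) *
        roundsDA n π k


lemma sum_ite_and' (n c : ℕ) (Q : Prop) [Decidable Q] :
    (∑ k ∈ Finset.range n, if k = c ∧ Q then (1:ZMod 2) else 0)
      = if c < n ∧ Q then 1 else 0 := by
  have h : ∀ k, (if k = c ∧ Q then (1:ZMod 2) else 0)
      = if k = c then (if Q then 1 else 0) else 0 := by
    intro k; by_cases h1 : k = c <;> by_cases h2 : Q <;> simp [h1, h2]
  simp_rw [h, Finset.sum_ite_eq' (Finset.range n) c, Finset.mem_range]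
  by_cases h1 : c < n <;> by_cases h2 : Q <;> simp [h1, h2]

lemma derMat_mul_accMat (n : ℕ) : derMat n * accMat n = 1 := by
  ext i j
  rw [Matrix.mul_apply]
  simp only [derMat, accMat, Matrix.of_apply, Fin.le_def]
  rw [Fin.sum_univ_eq_sum_range
    (fun k => (if (i:ℕ) = k ∨ (i:ℕ) = k + 1 then (1:ZMod 2) else 0) * (if (j:ℕ) ≤ k then 1 else 0))]
  have h : ∀ k, (if (i:ℕ) = k ∨ (i:ℕ) = k + 1 then (1:ZMod 2) else 0) * (if (j:ℕ) ≤ k then 1 else 0)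
      = (if k = (i:ℕ) ∧ (j:ℕ) ≤ (i:ℕ) then 1 else 0)
        + (if k = (i:ℕ) - 1 ∧ (1 ≤ (i:ℕ) ∧ (j:ℕ) + 1 ≤ (i:ℕ)) then 1 else 0) := by
    intro k
    split_ifs <;> first | decide | (exfalso; omega)
  simp_rw [h, Finset.sum_add_distrib, sum_ite_and']
  have hi := i.isLt
  have hj := j.isLt
  rw [Matrix.one_apply]
  simp only [Fin.ext_iff]
  split_ifs <;> first | decide | (exfalso; omega)

lemma accMat_mul_derMat (n : ℕ) : accMat n * derMat n = 1 :=
  mul_eq_one_comm.mp (derMat_mul_accMat n)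

lemma permMat_mul_transpose {n : ℕ} (π : Equiv.Perm (Fin n)) :
    permMat π * (permMat π)ᵀ = 1 := by
  ext i j
  rw [Matrix.mul_apply, Matrix.one_apply]
  simp only [permMat, Matrix.transpose_apply, Matrix.of_apply, ite_mul, one_mul, zero_mul,
    Finset.sum_ite_eq, Finset.mem_univ, if_true]
  by_cases h : i = j
  · simp [h]
  · simp [h, fun hh => h (π.injective hh).symm, Ne.symm]

lemma transpose_mul_permMat {n : ℕ} (π : Equiv.Perm (Fin n)) :
    (permMat π)ᵀ * permMat π = 1 :=
  mul_eq_one_comm.mp (permMat_mul_transpose π)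

lemma rounds_cancel (n : ℕ) (π : ℕ → Equiv.Perm (Fin n)) :
    ∀ k, (roundsDA n π k)ᵀ * roundsAD n π k = 1 := by
  have hDA : ∀ X : Matrix (Fin n) (Fin n) (ZMod 2), derMat n * (accMat n * X) = X := by
    intro X; rw [← mul_assoc, derMat_mul_accMat, one_mul]
  have hAD : ∀ X : Matrix (Fin n) (Fin n) (ZMod 2), accMat n * (derMat n * X) = X := by
    intro X; rw [← mul_assoc, accMat_mul_derMat, one_mul]
  have hPt : ∀ (σ : Equiv.Perm (Fin n)) (X : Matrix (Fin n) (Fin n) (ZMod 2)),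
      (permMat σ)ᵀ * (permMat σ * X) = X := by
    intro σ X; rw [← mul_assoc, transpose_mul_permMat, one_mul]
  intro k
  induction k with
  | zero => simp [roundsDA, roundsAD]
  | succ k ih =>
    simp only [roundsDA, roundsAD, Matrix.transpose_mul, Matrix.transpose_transpose,
      mul_assoc]
    rw [hDA, hPt, hAD, hPt, ih]

lemma repMat_cancel (n : ℕ) : (repMat n)ᵀ * repMat n = 0 := by
  ext j j'
  rw [Matrix.mul_apply]
  simp only [repMat, Matrix.transpose_apply, Matrix.of_apply]
  rw [Fin.sum_univ_eq_sum_range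
    (fun i => (if (j:ℕ) = i / 2 then (1:ZMod 2) else 0) * (if (j':ℕ) = i / 2 then 1 else 0))]
  have h : ∀ i, (if (j:ℕ) = i / 2 then (1:ZMod 2) else 0) * (if (j':ℕ) = i / 2 then 1 else 0)
      = (if i = 2 * (j:ℕ) ∧ (j':ℕ) = (j:ℕ) then 1 else 0)
        + (if i = 2 * (j:ℕ) + 1 ∧ (j':ℕ) = (j:ℕ) then 1 else 0) := by
    intro i
    split_ifs <;> first | decide | (exfalso; omega)
  simp_rw [h, Finset.sum_add_distrib, sum_ite_and']
  have hj := j.isLt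
  have hj' := j'.isLt
  rw [Matrix.zero_apply]
  split_ifs <;> first | decide | (exfalso; omega)

/-- For even `n` and `m ≥ 1`, the generator matrices
`G = A·M_{π_{2m}}·D·M_{π_{2m-1}} ⋯ A·M_{π_2}·D·M_{π_1}·F` and
`H = Dᵀ·M_{π_{2m}}·Aᵀ·M_{π_{2m-1}} ⋯ Dᵀ·M_{π_2}·Aᵀ·M_{π_1}·F`
satisfy `Hᵀ·G = 0`; in particular they generate dual codes. -/
theorem rad_rda_dual (n m : ℕ) (hn : Even n) (hm : 1 ≤ m) (π : ℕ → Equiv.Perm (Fin n)) :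
    (roundsDA n π m * repMat n)ᵀ * (roundsAD n π m * repMat n) = 0 := by
  rw [Matrix.transpose_mul, Matrix.mul_assoc ((repMat n)ᵀ),
    ← Matrix.mul_assoc ((roundsDA n π m)ᵀ), rounds_cancel, Matrix.one_mul, repMat_cancel]
end

section
/- For fixed β ∈ [0,1], the function α ↦ f_A(α,β) is monotonically decreasing: if 0 ≤ α₁ ≤ α₂, α₂ < 1, and α₂ ≤ min{2β, 2(1−β)}, then f_A(α₂,β) ≤ f_A(α₁,β). -/
/-- The spectral shape exponent of the accumulator:
`f_A(α,β) = α − h(β) + (1−α)·h((β−α/2)/(1−α))`. -/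
noncomputable def fA (α β : ℝ) : ℝ :=
  α - binEnt β + (1 - α) * binEnt ((β - α / 2) / (1 - α))

/-- The spectral shape exponent of the discrete derivative:
`f_D(α,β) = (1−α)·h(β/(2(1−α))) + α·h(β/(2α)) − h(α)`. -/
noncomputable def fD (α β : ℝ) : ℝ :=
  (1 - α) * binEnt (β / (2 * (1 - α))) + α * binEnt (β / (2 * α)) - binEnt α

/-!
Clearing the denominator `1 - α = (β - α/2) + (1 - β - α/2)` with the grouping rule for entropy
turns `log 2 · (f_A(α,β) + h(β))` into `α log 2 + η(β - α/2) + η(1 - β - α/2) - η(1 - α)`,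
where `η(x) = -x log x`. Its derivative in `α` is `log 2 + (log u + log v)/2 - log (u + v)` with
`u = β - α/2`, `v = 1 - β - α/2`, which is `≤ 0` by the AM-GM inequality `√(uv) ≤ (u + v)/2`.
-/

open Real Set

lemma binEnt_eq_binEntropy_div_log_two (x : ℝ) : binEnt x = binEntropy x / log 2 := by
  rw [binEnt, binEntropy_eq_negMulLog_add_negMulLog_one_sub, negMulLog, negMulLog, logb, logb]
  ring

/-- For `u + v = 0` both sides vanish: `u / 0 = 0` and `log` is even. -/
lemma add_mul_binEntropy_div_add (u v : ℝ) :
    (u + v) * binEntropy (u / (u + v)) = negMulLog u + negMulLog v - negMulLog (u + v) := by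
  rcases eq_or_ne (u + v) 0 with hd | hd
  · obtain rfl : v = -u := by linarith
    simp [negMulLog, log_neg_eq_log]
  have hu : u = u / (u + v) * (u + v) := by field_simp
  have hv : v = (1 - u / (u + v)) * (u + v) := by field_simp; ring
  have hsum : u / (u + v) + (1 - u / (u + v)) = 1 := by ring
  rw [binEntropy_eq_negMulLog_add_negMulLog_one_sub]
  conv_rhs => rw [hu, negMulLog_mul, ← hu, hv, negMulLog_mul, ← hv]
  linear_combination (-negMulLog (u + v)) * hsum

lemma log_add_log_div_two_le_log_add_div_two {u v : ℝ} (hu : 0 < u) (hv : 0 < v) :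
    (log u + log v) / 2 ≤ log ((u + v) / 2) := by
  have hamgm : u * v ≤ ((u + v) / 2) ^ 2 := by nlinarith [sq_nonneg (u - v)]
  have := log_le_log (by positivity) hamgm
  rw [log_mul hu.ne' hv.ne', log_pow] at this
  push_cast at this
  linarith

noncomputable def fAShifted (a b α : ℝ) : ℝ :=
  α * log 2 + negMulLog (a - α / 2) + negMulLog (b - α / 2) - negMulLog (a + b - α)

lemma fA_eq_fAShifted (α β : ℝ) : fA α β = fAShifted β (1 - β) α / log 2 - binEnt β := by
  have key := add_mul_binEntropy_div_add (β - α / 2) (1 - β - α / 2)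
  rw [show β - α / 2 + (1 - β - α / 2) = 1 - α by ring] at key
  rw [fA, fAShifted, binEnt_eq_binEntropy_div_log_two ((β - α / 2) / (1 - α)), mul_div_assoc',
    key, show β + (1 - β) - α = 1 - α by ring]
  field_simp
  ring

lemma continuous_fAShifted (a b : ℝ) : Continuous (fAShifted a b) := by
  unfold fAShifted
  fun_prop

lemma hasDerivAt_fAShifted {a b α : ℝ} (hu : 0 < a - α / 2) (hv : 0 < b - α / 2) :
    HasDerivAt (fAShifted a b)
      (log 2 + (log (a - α / 2) + log (b - α / 2)) / 2 - log (a + b - α)) α := by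
  have hd : a + b - α ≠ 0 := by linarith
  have hu' := (hasDerivAt_negMulLog hu.ne').comp α (((hasDerivAt_id α).div_const 2).const_sub a)
  have hv' := (hasDerivAt_negMulLog hv.ne').comp α (((hasDerivAt_id α).div_const 2).const_sub b)
  have hd' := (hasDerivAt_negMulLog hd).comp α ((hasDerivAt_id α).const_sub (a + b))
  exact ((((hasDerivAt_id α).mul_const (log 2)).add hu').add hv').sub hd' |>.congr_deriv (by ring)

lemma antitoneOn_fAShifted (a b : ℝ) :
    AntitoneOn (fAShifted a b) (Iic (min (2 * a) (2 * b))) := by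
  have hpos {α : ℝ} (hα : α ∈ interior (Iic (min (2 * a) (2 * b)))) :
      0 < a - α / 2 ∧ 0 < b - α / 2 := by
    rw [interior_Iic, mem_Iio, lt_min_iff] at hα
    constructor <;> linarith
  refine antitoneOn_of_deriv_nonpos (convex_Iic _) (continuous_fAShifted a b).continuousOn
    (fun α hα => ?_) (fun α hα => ?_) <;> obtain ⟨hu, hv⟩ := hpos hα
  · exact (hasDerivAt_fAShifted hu hv).differentiableAt.differentiableWithinAt
  · rw [(hasDerivAt_fAShifted hu hv).deriv]
    have hamgm := log_add_log_div_two_le_log_add_div_two hu hv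
    rw [show a - α / 2 + (b - α / 2) = a + b - α by ring, log_div (by linarith) two_ne_zero]
      at hamgm
    linarith

theorem fA_antitone_left_general (β : ℝ)
    (α₁ α₂ : ℝ) (h12 : α₁ ≤ α₂)
    (hdom : α₂ ≤ min (2 * β) (2 * (1 - β))) :
    fA α₂ β ≤ fA α₁ β := by
  have hshift := antitoneOn_fAShifted β (1 - β) (h12.trans hdom) hdom h12
  rw [fA_eq_fAShifted, fA_eq_fAShifted]
  gcongr

/-- `f_A(α,β)` is monotonically decreasing in `α`. -/
theorem fA_antitone_left (β : ℝ) (hβ0 : 0 ≤ β) (hβ1 : β ≤ 1)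
    (α₁ α₂ : ℝ) (h1 : 0 ≤ α₁) (h12 : α₁ ≤ α₂) (h2 : α₂ < 1)
    (hdom : α₂ ≤ min (2 * β) (2 * (1 - β))) :
    fA α₂ β ≤ fA α₁ β :=
  fA_antitone_left_general β α₁ α₂ h12 hdom
end

section
/- For all α, β with 0 ≤ α < 1 and α/2 ≤ β ≤ 1−α/2, one has f_A(α,β) ≤ h(β) − h(α). -/
/-- Pointwise Gibbs inequality: `p − q ≤ p·log p − p·log q`. -/
lemma fA_pt_ineq (p q : ℝ) (hp : 0 ≤ p) (hq : 0 < q) :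
    p - q ≤ p * Real.log p - p * Real.log q := by
  rcases eq_or_lt_of_le hp with h | h
  · simp [← h]; linarith
  · have h1 : Real.log (q / p) ≤ q / p - 1 :=
      Real.log_le_sub_one_of_pos (by positivity)
    have h2 : Real.log (q / p) = Real.log q - Real.log p :=
      Real.log_div hq.ne' h.ne'
    have h3 := mul_le_mul_of_nonneg_left h1 h.le
    rw [h2] at h3
    have h4 : p * (q / p - 1) = q - p := by field_simp
    nlinarith

/-- The key inequality: Gibbs' inequality for the joint distribution
`p = (a, u−a, a, v−a)` against `q = (uv, u², uv, v²)`, where `u + v = 1`. -/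
lemma fA_key (a u v : ℝ) (ha : 0 ≤ a) (hau : a ≤ u) (hav : a ≤ v) (hsum : u + v = 1) :
    2*(u*Real.log u) + 2*(v*Real.log v) ≤
      2*(a*Real.log a) + (u-a)*Real.log (u-a) + (v-a)*Real.log (v-a) := by
  rcases eq_or_lt_of_le (ha.trans hau) with hu | hu
  · have ha0 : a = 0 := le_antisymm (by linarith [hau, hu]) ha
    have hv1 : v = 1 := by linarith [hu]
    simp [← hu, ha0, hv1]
  rcases eq_or_lt_of_le (ha.trans hav) with hv | hv
  · have ha0 : a = 0 := le_antisymm (by linarith [hav, hv]) ha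
    have hu1 : u = 1 := by linarith [hv]
    simp [← hv, ha0, hu1]
  have A := fA_pt_ineq a (u*v) ha (by positivity)
  have B := fA_pt_ineq (u-a) (u*u) (by linarith) (by positivity)
  have C := fA_pt_ineq (v-a) (v*v) (by linarith) (by positivity)
  rw [Real.log_mul hu.ne' hv.ne'] at A
  rw [Real.log_mul hu.ne' hu.ne'] at B
  rw [Real.log_mul hv.ne' hv.ne'] at C
  have hs2 : u*u + 2*(u*v) + v*v = 1 := by nlinarith [hsum]
  nlinarith [A, B, C]

lemma fA_scale_mulLog (x c : ℝ) (hx : 0 ≤ x) (hc : 0 < c) :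
    c * ((x / c) * Real.log (x / c)) = x * Real.log x - x * Real.log c := by
  rcases eq_or_lt_of_le hx with h | h
  · simp [← h]
  · rw [Real.log_div h.ne' hc.ne']
    field_simp

lemma fA_log2_binEnt (x : ℝ) :
    Real.log 2 * binEnt x = -(x * Real.log x) - (1 - x) * Real.log (1 - x) := by
  have h2 : Real.log 2 ≠ 0 := (Real.log_pos one_lt_two).ne'
  simp only [binEnt, Real.logb]
  field_simp

/-- `f_A(α,β) ≤ h(β) − h(α)` on the domain of `f_A`. -/
theorem fA_le_entropy_diff (α β : ℝ) (hα0 : 0 ≤ α) (hα1 : α < 1)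
    (hβl : α / 2 ≤ β) (hβu : β ≤ 1 - α / 2) :
    fA α β ≤ binEnt β - binEnt α := by
  have hl2 : (0:ℝ) < Real.log 2 := Real.log_pos one_lt_two
  set a := α / 2 with hadef
  have h1α : 0 < 1 - α := by linarith
  set t := (β - a) / (1 - α) with htdef
  have ht1 : 1 - t = (1 - β - a) / (1 - α) := by
    rw [htdef]; field_simp; ring
  have hS1 : (1 - α) * (t * Real.log t) =
      (β - a) * Real.log (β - a) - (β - a) * Real.log (1 - α) := by
    rw [htdef]; exact fA_scale_mulLog (β - a) (1 - α) (by linarith) h1α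
  have hS2 : (1 - α) * ((1 - t) * Real.log (1 - t)) =
      (1 - β - a) * Real.log (1 - β - a) - (1 - β - a) * Real.log (1 - α) := by
    rw [ht1]; exact fA_scale_mulLog (1 - β - a) (1 - α) (by linarith) h1α
  have hαa : α = 2 * a := by rw [hadef]; ring
  have hS3 : α * Real.log α = α * Real.log 2 + 2 * (a * Real.log a) := by
    rcases eq_or_lt_of_le hα0 with h | h
    · simp [← h, hadef]
    · have ha0 : 0 < a := by rw [hadef]; linarith
      rw [hαa, Real.log_mul (by norm_num) ha0.ne']
      ring
  have hK := fA_key a β (1 - β) (by rw [hadef]; linarith) hβl (by linarith)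
    (by ring)
  rw [fA, ← sub_nonneg]
  have expand : binEnt β - binEnt α - (α - binEnt β + (1 - α) * binEnt t) =
      (Real.log 2)⁻¹ * (Real.log 2 * binEnt β - Real.log 2 * binEnt α
        - (α * Real.log 2 - Real.log 2 * binEnt β
           + (1 - α) * (Real.log 2 * binEnt t))) := by
    field_simp
  rw [expand]
  have inner : 0 ≤ Real.log 2 * binEnt β - Real.log 2 * binEnt α
        - (α * Real.log 2 - Real.log 2 * binEnt β
           + (1 - α) * (Real.log 2 * binEnt t)) := by
    rw [fA_log2_binEnt, fA_log2_binEnt, fA_log2_binEnt]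
    have hmul : (1 - α) * (-(t * Real.log t) - (1 - t) * Real.log (1 - t)) =
        -((1 - α) * (t * Real.log t)) - (1 - α) * ((1 - t) * Real.log (1 - t)) := by
      ring
    rw [hmul, hS1, hS2, hαa] at *
    nlinarith [hK]
  positivity
end

section
/- For every α ∈ [0,1] with α ≠ 1/2 or α = 1/2 (i.e., for all α ∈ [0,1]), h(2α(1−α)) + f_A(2α(1−α), α) = h(α). (Note 2α(1−α) ≤ 1/2 < 1 and α(1−α) ≤ α ≤ 1 − α(1−α), so the expression is well defined for every α ∈ [0,1].) -/
/-!
Let `X, Y` be independent Bernoulli(α) bits and `Z = [X ≠ Y]`, so `P(Z = 1) = 2α(1−α)`.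
The chain rule `H(X,Y) = H(Z) + H(X,Y | Z)` reads
`2h(α) = h(2α(1−α)) + 2α(1−α)·1 + (α² + (1−α)²)·h(α² / (α² + (1−α)²))`,
which is the identity, since `1 − 2α(1−α) = α² + (1−α)²` and `α − α(1−α) = α²`.
-/

open Real

theorem mul_logb_mul (b x y : ℝ) :
    x * y * logb b (x * y) = y * (x * logb b x) + x * (y * logb b y) := by
  rcases eq_or_ne x 0 with rfl | hx
  · simp
  rcases eq_or_ne y 0 with rfl | hy
  · simp
  rw [logb_mul hx hy]
  ring

theorem mul_logb_div (b x y : ℝ) (hy : y ≠ 0) :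
    x * logb b (x / y) = x * logb b x - x * logb b y := by
  rcases eq_or_ne x 0 with rfl | hx
  · simp
  rw [logb_div hx hy]
  ring

theorem mul_binEnt_div_add (u v : ℝ) (h : u + v ≠ 0) :
    (u + v) * binEnt (u / (u + v)) =
      -(u * logb 2 u) - v * logb 2 v + (u + v) * logb 2 (u + v) := by
  have hv : 1 - u / (u + v) = v / (u + v) := by field_simp; ring
  have hu' : (u + v) * (u / (u + v)) = u := by field_simp
  have hv' : (u + v) * (v / (u + v)) = v := by field_simp
  rw [binEnt, hv, mul_sub, mul_neg, ← mul_assoc, ← mul_assoc, hu', hv',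
    mul_logb_div _ _ _ h, mul_logb_div _ _ _ h]
  ring

theorem entropy_fA_identity_general (α : ℝ) :
    binEnt (2 * α * (1 - α)) + fA (2 * α * (1 - α)) α = binEnt α := by
  have hs : 1 - 2 * α * (1 - α) = α ^ 2 + (1 - α) ^ 2 := by ring
  have hu : α - 2 * α * (1 - α) / 2 = α ^ 2 := by ring
  have hs0 : α ^ 2 + (1 - α) ^ 2 ≠ 0 := by nlinarith [sq_nonneg (2 * α - 1)]
  rw [fA, hs, hu, mul_binEnt_div_add _ _ hs0]
  simp only [binEnt, hs, logb_pow, mul_logb_mul, logb_self_eq_one one_lt_two]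
  ring

/-- `h(2α(1−α)) + f_A(2α(1−α), α) = h(α)` for every `α ∈ [0,1]`. -/
theorem entropy_fA_identity (α : ℝ) (hα0 : 0 ≤ α) (hα1 : α ≤ 1) :
    binEnt (2 * α * (1 - α)) + fA (2 * α * (1 - α)) α = binEnt α :=
  entropy_fA_identity_general α
end

section
/- For every α with 0 ≤ α < 1/2 and either choice of sign, setting s = (1 ± √(1−2α))/2, one has h(α) + f_A(α, s) = h(s); equivalently, f_A(α, (1 ± √(1−2α))/2) − h((1 ± √(1−2α))/2) = −h(α). -/
/-!
With `α = 2s(1−s)` one has `1 − α = s² + (1−s)²`, and the argument of the inner entropy in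
`f_A(α, s)` is `s² / (s² + (1−s)²)`. Expanding that entropy by the grouping rule
`(p+q)·h(p/(p+q)) = (p+q)·log(p+q) − p·log p − q·log q`, the `log(s² + (1−s)²)` terms cancel
against those of `h(α)`, and the rest collapses to `h(s)`. Both roots `s = (1 ± √(1−2α))/2`
of `2s(1−s) = α` then give the claim.
-/

open Real

theorem binEnt_div_add {p q : ℝ} (hp : p ≠ 0) (hq : q ≠ 0) (hpq : p + q ≠ 0) :
    (p + q) * binEnt (p / (p + q)) = (p + q) * logb 2 (p + q) - p * logb 2 p - q * logb 2 q := by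
  have hcompl : 1 - p / (p + q) = q / (p + q) := by field_simp; ring
  rw [binEnt, hcompl, logb_div hp hpq, logb_div hq hpq]
  field_simp
  ring

theorem binEnt_two_mul_mul_one_sub_add_fA (s : ℝ) :
    binEnt (2 * s * (1 - s)) + fA (2 * s * (1 - s)) s = binEnt s := by
  rcases eq_or_ne s 0 with rfl | hs0
  · simp [binEnt, fA]
  rcases eq_or_ne s 1 with rfl | hs1
  · simp [binEnt, fA]
  have hs1' : 1 - s ≠ 0 := sub_ne_zero.mpr (Ne.symm hs1)
  have hsq : s ^ 2 + (1 - s) ^ 2 ≠ 0 := by positivity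
  have hcompl : 1 - 2 * s * (1 - s) = s ^ 2 + (1 - s) ^ 2 := by ring
  have hinner : (s - 2 * s * (1 - s) / 2) / (1 - 2 * s * (1 - s))
      = s ^ 2 / (s ^ 2 + (1 - s) ^ 2) := by
    rw [hcompl]; congr 1; ring
  have hlogα : logb 2 (2 * s * (1 - s)) = 1 + logb 2 s + logb 2 (1 - s) := by
    rw [logb_mul (by positivity) hs1', logb_mul two_ne_zero hs0, logb_self_eq_one one_lt_two]
  have hgroup := binEnt_div_add (pow_ne_zero 2 hs0) (pow_ne_zero 2 hs1') hsq
  rw [logb_pow, logb_pow] at hgroup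
  simp only [fA, binEnt] at hgroup ⊢
  rw [hinner, hcompl, hgroup, hlogα]
  push_cast
  ring

theorem entropy_fA_sqrt_identity_general (α : ℝ) (hα1 : α < 1 / 2) :
    (binEnt α + fA α ((1 + Real.sqrt (1 - 2 * α)) / 2)
        = binEnt ((1 + Real.sqrt (1 - 2 * α)) / 2)) ∧
    (binEnt α + fA α ((1 - Real.sqrt (1 - 2 * α)) / 2)
        = binEnt ((1 - Real.sqrt (1 - 2 * α)) / 2)) := by
  have of_root : ∀ s : ℝ, 2 * s * (1 - s) = α → binEnt α + fA α s = binEnt s :=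
    fun s hs => hs ▸ binEnt_two_mul_mul_one_sub_add_fA s
  have hsqrt := Real.sq_sqrt (by linarith : (0 : ℝ) ≤ 1 - 2 * α)
  exact ⟨of_root _ (by linear_combination (-1 / 2 : ℝ) * hsqrt),
    of_root _ (by linear_combination (-1 / 2 : ℝ) * hsqrt)⟩

/-- For `0 ≤ α < 1/2` and either sign, with `s = (1 ± √(1−2α))/2` one has
`h(α) + f_A(α, s) = h(s)`. -/
theorem entropy_fA_sqrt_identity (α : ℝ) (hα0 : 0 ≤ α) (hα1 : α < 1 / 2) :
    (binEnt α + fA α ((1 + Real.sqrt (1 - 2 * α)) / 2)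
        = binEnt ((1 + Real.sqrt (1 - 2 * α)) / 2)) ∧
    (binEnt α + fA α ((1 - Real.sqrt (1 - 2 * α)) / 2)
        = binEnt ((1 - Real.sqrt (1 - 2 * α)) / 2)) :=
  entropy_fA_sqrt_identity_general α hα1
end

section
/- Let α, β, γ ∈ [0,1] satisfy 0 < α < 1, β < 1, and β/2 ≤ min{α, 1−α, γ, 1−γ}. Then f_D(α,β) + f_A(β,γ) ≤ g(α,γ), where g(α,γ) equals f_A(α,γ) if α ≤ 2γ(1−γ); equals h(γ) − h(α) if 2γ(1−γ) ≤ α ≤ 1 − 2γ(1−γ); and equals f_A(1−α, γ) if α ≥ 1 − 2γ(1−γ). -/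
/-- The piecewise upper bound `g(α,γ)`: `f_A(α,γ)` if `α ≤ 2γ(1−γ)`,
`h(γ) − h(α)` if `2γ(1−γ) ≤ α ≤ 1 − 2γ(1−γ)`, and `f_A(1−α,γ)` if `α ≥ 1 − 2γ(1−γ)`. -/
noncomputable def gBound (α γ : ℝ) : ℝ :=
  if α ≤ 2 * γ * (1 - γ) then fA α γ
  else if α ≤ 1 - 2 * γ * (1 - γ) then binEnt γ - binEnt α
  else fA (1 - α) γ

open Real

private lemma binEnt_zero : binEnt 0 = 0 := by simp [binEnt]

private lemma binEnt_one : binEnt 1 = 0 := by simp [binEnt]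

private lemma binEnt_one_sub (x : ℝ) : binEnt (1 - x) = binEnt x := by
  simp only [binEnt, sub_sub_cancel]; ring

private lemma fD_symm (α β : ℝ) : fD α β = fD (1 - α) β := by
  simp only [fD, sub_sub_cancel, binEnt_one_sub]; ring

private lemma mul_log_le {p q : ℝ} (hp : 0 ≤ p) (hq : 0 < q) :
    p * Real.log q - p * Real.log p ≤ q - p := by
  rcases eq_or_lt_of_le hp with h | h
  · simp [← h]; linarith
  · have h1 : Real.log (q / p) ≤ q / p - 1 := Real.log_le_sub_one_of_pos (div_pos hq h)
    rw [Real.log_div (ne_of_gt hq) (ne_of_gt h)] at h1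
    have h2 := mul_le_mul_of_nonneg_left h1 h.le
    have h3 : p * (q / p) = q := by field_simp
    nlinarith

/-- Gibbs' inequality for the binary entropy. -/
private lemma gibbs {p q : ℝ} (hp0 : 0 ≤ p) (hp1 : p ≤ 1) (hq0 : 0 < q) (hq1 : q < 1) :
    binEnt p ≤ -(p * logb 2 q) - (1 - p) * logb 2 (1 - q) := by
  have h1 := mul_log_le hp0 hq0
  have h2 := mul_log_le (p := 1 - p) (q := 1 - q) (by linarith) (by linarith)
  have key : -(p * Real.log p) - (1 - p) * Real.log (1 - p)
      ≤ -(p * Real.log q) - (1 - p) * Real.log (1 - q) := by nlinarith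
  have hl2 : (0:ℝ) < Real.log 2 := Real.log_pos one_lt_two
  have e1 : binEnt p = (-(p * Real.log p) - (1 - p) * Real.log (1 - p)) / Real.log 2 := by
    simp only [binEnt, Real.logb]; ring
  have e2 : -(p * logb 2 q) - (1 - p) * logb 2 (1 - q)
      = (-(p * Real.log q) - (1 - p) * Real.log (1 - q)) / Real.log 2 := by
    simp only [Real.logb]; ring
  rw [e1, e2]
  exact div_le_div_of_nonneg_right key hl2.le

/-- Two-point Jensen/Gibbs combination for the `f_D` entropies. -/
private lemma jensen2 {α β q : ℝ} (hα0 : 0 < α) (hα1 : α < 1)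
    (hb0 : 0 ≤ β) (h1 : β / 2 ≤ α) (h2 : β / 2 ≤ 1 - α) (hq0 : 0 < q) (hq1 : q < 1) :
    (1 - α) * binEnt (β / (2 * (1 - α))) + α * binEnt (β / (2 * α))
      ≤ -(β * logb 2 q) - (1 - β) * logb 2 (1 - q) := by
  have hx1a : (0:ℝ) ≤ β / (2 * (1 - α)) := div_nonneg hb0 (by linarith)
  have hx1b : β / (2 * (1 - α)) ≤ 1 := by
    rw [div_le_one (by linarith)]; linarith
  have hx2a : (0:ℝ) ≤ β / (2 * α) := div_nonneg hb0 (by linarith)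
  have hx2b : β / (2 * α) ≤ 1 := by
    rw [div_le_one (by linarith)]; linarith
  have g1 := gibbs hx1a hx1b hq0 hq1
  have g2 := gibbs hx2a hx2b hq0 hq1
  have m1 := mul_le_mul_of_nonneg_left g1 (by linarith : (0:ℝ) ≤ 1 - α)
  have m2 := mul_le_mul_of_nonneg_left g2 hα0.le
  have hne1 : (1:ℝ) - α ≠ 0 := by linarith
  have hne2 : α ≠ 0 := ne_of_gt hα0
  have e1 : (1 - α) * (β / (2 * (1 - α))) = β / 2 := by field_simp
  have e2 : α * (β / (2 * α)) = β / 2 := by field_simp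
  have key : (1 - α) * (-(β / (2 * (1 - α)) * logb 2 q) - (1 - β / (2 * (1 - α))) * logb 2 (1 - q))
      + α * (-(β / (2 * α) * logb 2 q) - (1 - β / (2 * α)) * logb 2 (1 - q))
      = -(β * logb 2 q) - (1 - β) * logb 2 (1 - q) := by
    linear_combination (logb 2 (1 - q) - logb 2 q) * e1 + (logb 2 (1 - q) - logb 2 q) * e2
  linarith

/-- Scaled Gibbs for the `(1-β)·h((γ-β/2)/(1-β))` term. -/
private lemma gibbs_scaled {β γ q : ℝ} (hb0 : 0 ≤ β) (hb1 : β < 1)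
    (h1 : β / 2 ≤ γ) (h2 : β / 2 ≤ 1 - γ) (hq0 : 0 < q) (hq1 : q < 1) :
    (1 - β) * binEnt ((γ - β / 2) / (1 - β))
      ≤ -((γ - β / 2) * logb 2 q) - (1 - γ - β / 2) * logb 2 (1 - q) := by
  have hy0 : (0:ℝ) ≤ (γ - β / 2) / (1 - β) := by
    apply div_nonneg <;> linarith
  have hy1 : (γ - β / 2) / (1 - β) ≤ 1 := by
    rw [div_le_one (by linarith)]; linarith
  have g := gibbs hy0 hy1 hq0 hq1
  have m := mul_le_mul_of_nonneg_left g (by linarith : (0:ℝ) ≤ 1 - β)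
  have hne : (1:ℝ) - β ≠ 0 := by linarith
  have e1 : (1 - β) * ((γ - β / 2) / (1 - β)) = γ - β / 2 := by field_simp
  have key : (1 - β) * (-((γ - β / 2) / (1 - β) * logb 2 q)
        - (1 - (γ - β / 2) / (1 - β)) * logb 2 (1 - q))
      = -((γ - β / 2) * logb 2 q) - (1 - γ - β / 2) * logb 2 (1 - q) := by
    linear_combination (logb 2 (1 - q) - logb 2 q) * e1
  linarith

/-- Middle-region key fact: `h(β) + β + (1-β)h((γ-β/2)/(1-β)) ≤ 2 h(γ)`. -/
private lemma psi_le_two_hgamma {β γ : ℝ} (hγ0 : 0 < γ) (hγ1 : γ < 1)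
    (hb0 : 0 ≤ β) (hb1 : β < 1) (h1 : β / 2 ≤ γ) (h2 : β / 2 ≤ 1 - γ) :
    binEnt β + β + (1 - β) * binEnt ((γ - β / 2) / (1 - β)) ≤ 2 * binEnt γ := by
  have hs0 : (0:ℝ) < 2 * γ * (1 - γ) := by nlinarith
  have hs1 : 2 * γ * (1 - γ) < 1 := by nlinarith [sq_nonneg (1 - 2*γ)]
  have hN : (0:ℝ) < γ ^ 2 + (1 - γ) ^ 2 := by positivity
  have hq0 : (0:ℝ) < γ ^ 2 / (γ ^ 2 + (1 - γ) ^ 2) := by positivity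
  have hq1 : γ ^ 2 / (γ ^ 2 + (1 - γ) ^ 2) < 1 := by
    rw [div_lt_one hN]; nlinarith
  have g1 := gibbs hb0 hb1.le hs0 hs1
  have g2 := gibbs_scaled hb0 hb1 h1 h2 hq0 hq1
  -- expand the logs
  have e1 : logb 2 (2 * γ * (1 - γ)) = 1 + logb 2 γ + logb 2 (1 - γ) := by
    rw [logb_mul (by positivity) (by linarith), logb_mul (by norm_num) (by linarith),
      logb_self_eq_one (by norm_num)]
  have e2 : (1:ℝ) - 2 * γ * (1 - γ) = γ ^ 2 + (1 - γ) ^ 2 := by ring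
  have hγne : γ ≠ 0 := ne_of_gt hγ0
  have hγne' : (1:ℝ) - γ ≠ 0 := by linarith
  have e3 : logb 2 (γ ^ 2 / (γ ^ 2 + (1 - γ) ^ 2))
      = 2 * logb 2 γ - logb 2 (γ ^ 2 + (1 - γ) ^ 2) := by
    rw [logb_div (pow_ne_zero 2 hγne) (ne_of_gt hN), logb_pow]
    push_cast
    try ring
  have e4 : (1:ℝ) - γ ^ 2 / (γ ^ 2 + (1 - γ) ^ 2) = (1 - γ) ^ 2 / (γ ^ 2 + (1 - γ) ^ 2) := by
    rw [eq_div_iff (ne_of_gt hN), sub_mul, div_mul_cancel₀ _ (ne_of_gt hN)]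
    ring
  have e5 : logb 2 ((1 - γ) ^ 2 / (γ ^ 2 + (1 - γ) ^ 2))
      = 2 * logb 2 (1 - γ) - logb 2 (γ ^ 2 + (1 - γ) ^ 2) := by
    rw [logb_div (pow_ne_zero 2 hγne') (ne_of_gt hN), logb_pow]
    push_cast
    try ring
  rw [e2] at g1
  rw [e4, e5] at g2
  have hbe : binEnt γ = -(γ * logb 2 γ) - (1 - γ) * logb 2 (1 - γ) := rfl
  rw [e1] at g1
  rw [e3] at g2
  linarith

/-- Middle-region bound, unconditional in `α`. -/
private lemma lemM {α β γ : ℝ} (hα0 : 0 < α) (hα1 : α < 1)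
    (hγ0 : 0 < γ) (hγ1 : γ < 1) (hb0 : 0 ≤ β) (hb1 : β < 1)
    (hba : β / 2 ≤ α) (hb1a : β / 2 ≤ 1 - α) (h1 : β / 2 ≤ γ) (h2 : β / 2 ≤ 1 - γ) :
    fD α β + fA β γ ≤ binEnt γ - binEnt α := by
  have hJ : (1 - α) * binEnt (β / (2 * (1 - α))) + α * binEnt (β / (2 * α)) ≤ binEnt β := by
    rcases eq_or_lt_of_le hb0 with h | h
    · have : β = 0 := h.symm
      subst this
      simp [binEnt_zero]
    · have j := jensen2 hα0 hα1 hb0 hba hb1a h hb1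
      have : -(β * logb 2 β) - (1 - β) * logb 2 (1 - β) = binEnt β := rfl
      linarith [j.trans_eq this]
  have hP := psi_le_two_hgamma hγ0 hγ1 hb0 hb1 h1 h2
  simp only [fD, fA]
  linarith

set_option maxHeartbeats 2000000 in
/-- Left-region bound: if `α ≤ 2γ(1-γ)` then `f_D(α,β)+f_A(β,γ) ≤ f_A(α,γ)`. -/
private lemma lemL {α β γ : ℝ} (hα0 : 0 < α) (hα1 : α < 1)
    (hb0 : 0 ≤ β) (hb1 : β < 1)
    (hba : β / 2 ≤ α) (hb1a : β / 2 ≤ 1 - α) (h1 : β / 2 ≤ γ) (h2 : β / 2 ≤ 1 - γ)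
    (hreg : α ≤ 2 * γ * (1 - γ)) :
    fD α β + fA β γ ≤ fA α γ := by
  have hγ0 : 0 < γ := by nlinarith
  have hγ1 : γ < 1 := by nlinarith
  have h2γ : 0 < 2 * γ - α := by nlinarith
  have h2γ' : 0 < 2 - 2 * γ - α := by nlinarith [sq_nonneg (1 - γ)]
  set z : ℝ := (γ - α / 2) / (1 - α) with hz_def
  have hz0 : 0 < z := div_pos (by linarith) (by linarith)
  have hz1 : z < 1 := by
    rw [hz_def, div_lt_one (by linarith)]; linarith
  have hne1 : (1:ℝ) - α ≠ 0 := by linarith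
  have hz_mul : (1 - α) * z = γ - α / 2 := by
    rw [hz_def]; field_simp
  have hz_mul2 : (1 - α) * (1 - z) = 1 - γ - α / 2 := by linear_combination -hz_mul
  -- A4 : (1-α) * binEnt z in cross-entropy form
  have hbz : binEnt z = -(z * logb 2 z) - (1 - z) * logb 2 (1 - z) := rfl
  have A4 : (1 - α) * binEnt z
      = -((γ - α / 2) * logb 2 z) - (1 - γ - α / 2) * logb 2 (1 - z) := by
    rw [hbz]
    linear_combination (-(logb 2 z)) * hz_mul + (-(logb 2 (1 - z))) * hz_mul2
  have hbα : binEnt α = -(α * logb 2 α) - (1 - α) * logb 2 (1 - α) := rfl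
  have G := gibbs_scaled hb0 hb1 h1 h2 hz0 hz1
  rcases le_total β α with hc | hc
  · -- case β ≤ α : use tangent with q = α, plus K ≥ 0
    have J := jensen2 hα0 hα1 hb0 hba hb1a hα0 hα1
    -- K ≥ 0
    have hz_prod : (2 * (1 - α)) ^ 2 * (z * (1 - z)) = (2 * γ - α) * (2 - 2 * γ - α) := by
      linear_combination (4 * ((1 - α) * (1 - z))) * hz_mul + (4 * (γ - α / 2)) * hz_mul2
    have hineq : α ^ 2 ≤ (2 * (1 - α)) ^ 2 * (z * (1 - z)) := by
      rw [hz_prod]; nlinarith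
    have hmono : logb 2 (α ^ 2) ≤ logb 2 ((2 * (1 - α)) ^ 2 * (z * (1 - z))) :=
      logb_le_logb_of_le (by norm_num) (pow_pos hα0 2) hineq
    have ex1 : logb 2 (α ^ 2) = 2 * logb 2 α := by
      rw [logb_pow]; push_cast; try ring
    have ex2 : logb 2 ((2 * (1 - α)) ^ 2 * (z * (1 - z)))
        = 2 * (1 + logb 2 (1 - α)) + logb 2 z + logb 2 (1 - z) := by
      rw [logb_mul (pow_ne_zero 2 (ne_of_gt (by linarith : (0:ℝ) < 2 * (1 - α))))
          (ne_of_gt (mul_pos hz0 (by linarith : (0:ℝ) < 1 - z))), logb_pow,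
        logb_mul (by norm_num : (2:ℝ) ≠ 0) (ne_of_gt (by linarith : (0:ℝ) < 1 - α)),
        logb_self_eq_one (by norm_num),
        logb_mul (ne_of_gt hz0) (ne_of_gt (by linarith : (0:ℝ) < 1 - z))]
      push_cast
      try ring
    have hK : 0 ≤ 1 + logb 2 (1 - α) - logb 2 α + (logb 2 z + logb 2 (1 - z)) / 2 := by
      rw [ex1, ex2] at hmono; linarith
    have key : (β - α) * (1 + logb 2 (1 - α) - logb 2 α + (logb 2 z + logb 2 (1 - z)) / 2) ≤ 0 :=
      mul_nonpos_of_nonpos_of_nonneg (by linarith) hK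
    have eq1 : (-(β * logb 2 α) - (1 - β) * logb 2 (1 - α)) - binEnt α + β - binEnt γ
          + (-((γ - β / 2) * logb 2 z) - (1 - γ - β / 2) * logb 2 (1 - z))
          - (α - binEnt γ + (1 - α) * binEnt z)
        = (β - α) * (1 + logb 2 (1 - α) - logb 2 α + (logb 2 z + logb 2 (1 - z)) / 2) := by
      linear_combination (-1 : ℝ) * hbα - A4
    simp only [fD, fA]
    linarith only [J, G, key, eq1]
  · -- case α ≤ β : fD ≤ 0 and φ(β) ≤ φ(α)
    have hx1a : (0:ℝ) ≤ β / (2 * (1 - α)) := div_nonneg hb0 (by linarith)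
    have hx1b : β / (2 * (1 - α)) ≤ 1 := by rw [div_le_one (by linarith)]; linarith
    have hx2a : (0:ℝ) ≤ β / (2 * α) := div_nonneg hb0 (by linarith)
    have hx2b : β / (2 * α) ≤ 1 := by rw [div_le_one (by linarith)]; linarith
    have g1 := gibbs hx1a hx1b hα0 hα1
    have g2 := gibbs hx2a hx2b (by linarith : (0:ℝ) < 1 - α) (by linarith : 1 - α < 1)
    rw [sub_sub_cancel] at g2
    have m1 := mul_le_mul_of_nonneg_left g1 (by linarith : (0:ℝ) ≤ 1 - α)
    have m2 := mul_le_mul_of_nonneg_left g2 hα0.le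
    have e1 : (1 - α) * (β / (2 * (1 - α))) = β / 2 := by field_simp
    have e2 : α * (β / (2 * α)) = β / 2 := by
      have : α ≠ 0 := ne_of_gt hα0
      field_simp
    have efD : (1 - α) * (-(β / (2 * (1 - α)) * logb 2 α)
          - (1 - β / (2 * (1 - α))) * logb 2 (1 - α))
        + α * (-(β / (2 * α) * logb 2 (1 - α)) - (1 - β / (2 * α)) * logb 2 α)
        = binEnt α := by
      rw [hbα]
      linear_combination (logb 2 (1 - α) - logb 2 α) * e1 + (logb 2 α - logb 2 (1 - α)) * e2
    have hfD : (1 - α) * binEnt (β / (2 * (1 - α))) + α * binEnt (β / (2 * α)) ≤ binEnt α := by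
      linarith only [m1, m2, efD]
    -- K' ≤ 0
    have hzz : 4 * (z * (1 - z)) ≤ 1 := by nlinarith [sq_nonneg (2 * z - 1)]
    have hlzz : logb 2 (4 * (z * (1 - z))) ≤ 0 :=
      logb_nonpos (by norm_num : (1:ℝ) < 2) (by nlinarith : (0:ℝ) ≤ 4 * (z * (1 - z))) hzz
    have ex3 : logb 2 (4 * (z * (1 - z))) = 2 + logb 2 z + logb 2 (1 - z) := by
      rw [logb_mul (by norm_num : (4:ℝ) ≠ 0) (ne_of_gt (mul_pos hz0 (by linarith : (0:ℝ) < 1 - z))),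
        logb_mul (ne_of_gt hz0) (ne_of_gt (by linarith : (0:ℝ) < 1 - z)),
        show (4:ℝ) = 2 * 2 by norm_num,
        logb_mul (by norm_num : (2:ℝ) ≠ 0) (by norm_num : (2:ℝ) ≠ 0),
        logb_self_eq_one (by norm_num)]
      ring
    have hK' : 1 + (logb 2 z + logb 2 (1 - z)) / 2 ≤ 0 := by
      rw [ex3] at hlzz; linarith
    have key : (β - α) * (1 + (logb 2 z + logb 2 (1 - z)) / 2) ≤ 0 :=
      mul_nonpos_of_nonneg_of_nonpos (by linarith) hK'
    have eq2 : β + (-((γ - β / 2) * logb 2 z) - (1 - γ - β / 2) * logb 2 (1 - z))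
          - (α + (1 - α) * binEnt z)
        = (β - α) * (1 + (logb 2 z + logb 2 (1 - z)) / 2) := by
      linear_combination (-1 : ℝ) * A4
    simp only [fD, fA]
    linarith only [hfD, G, key, eq2]

/-- `f_D(α,β) + f_A(β,γ) ≤ g(α,γ)` on the joint domain. -/
theorem fDA_le_gBound (α β γ : ℝ)
    (hα0 : 0 ≤ α) (hα1 : α ≤ 1) (hβ0 : 0 ≤ β) (hβ1 : β ≤ 1) (hγ0 : 0 ≤ γ) (hγ1 : γ ≤ 1)
    (hαpos : 0 < α) (hαlt : α < 1) (hβlt : β < 1)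
    (hdom : β / 2 ≤ min (min α (1 - α)) (min γ (1 - γ))) :
    fD α β + fA β γ ≤ gBound α γ := by
  have hba : β / 2 ≤ α := hdom.trans ((min_le_left _ _).trans (min_le_left _ _))
  have hb1a : β / 2 ≤ 1 - α := hdom.trans ((min_le_left _ _).trans (min_le_right _ _))
  have hbg : β / 2 ≤ γ := hdom.trans ((min_le_right _ _).trans (min_le_left _ _))
  have hbg1 : β / 2 ≤ 1 - γ := hdom.trans ((min_le_right _ _).trans (min_le_right _ _))
  rcases eq_or_lt_of_le hγ0 with hγz | hγpos
  · -- γ = 0 : forces β = 0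
    have hβz : β = 0 := by linarith [hbg, hγz]
    subst hβz
    have hγz' : γ = 0 := hγz.symm
    subst hγz'
    have hg : gBound α 0 = binEnt 0 - binEnt α := by
      rw [gBound, if_neg (by norm_num; linarith), if_pos (by norm_num; linarith)]
    rw [hg]
    simp [fD, fA, binEnt_zero]
  rcases eq_or_lt_of_le hγ1 with hγo | hγlt
  · -- γ = 1 : forces β = 0
    have hβz : β = 0 := by linarith
    subst hβz
    subst hγo
    have hg : gBound α 1 = binEnt 1 - binEnt α := by
      rw [gBound, if_neg (by norm_num; linarith), if_pos (by norm_num; linarith)]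
    rw [hg]
    norm_num [fD, fA, binEnt_zero, binEnt_one]
  -- main case 0 < γ < 1
  rcases le_or_gt α (2 * γ * (1 - γ)) with hL | hnL
  · rw [gBound, if_pos hL]
    exact lemL hαpos hαlt hβ0 hβlt hba hb1a hbg hbg1 hL
  rcases le_or_gt α (1 - 2 * γ * (1 - γ)) with hM | hnM
  · rw [gBound, if_neg (not_le.mpr hnL), if_pos hM]
    exact lemM hαpos hαlt hγpos hγlt hβ0 hβlt hba hb1a hbg hbg1
  · rw [gBound, if_neg (not_le.mpr hnL), if_neg (not_le.mpr hnM)]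
    rw [fD_symm]
    exact lemL (by linarith) (by linarith) hβ0 hβlt (by linarith) (by linarith) hbg hbg1
      (by linarith)
end

section
/- Fix α ∈ [1/2, 1). For every β with α/2 ≤ β ≤ 1 − α/2, one has f_A(α,β) − h(β) ≤ f_A(α,1/2) − 1; that is, the function β ↦ f_A(α,β) − h(β) on [α/2, 1−α/2] attains its maximum at β = 1/2 (where h(1/2) = 1). -/
/-!
In nats the claim reads `g β ≥ g (1/2) = (1 + α) log 2` for
`g x = 2 h(x) - (1 - α) h((x - α/2)/(1 - α))`. The function `g` is symmetric about `1/2`, and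
on the left half its derivative `2 log((1-x)/x) - log((1 - α/2 - x)/(x - α/2))` is nonpositive
because `x² (1 - α/2 - x) - (1-x)² (x - α/2) = (1 - 2x)(x² - x + α/2)`, where the last factor is
nonnegative precisely when `α ≥ 1/2`.
-/

open Real Set

lemma binEnt_half : binEnt (1 / 2) = 1 := by
  rw [binEnt_eq_binEntropy_div_log_two, one_div, binEntropy_two_inv,
    div_self (log_pos one_lt_two).ne']

noncomputable def entropyGap (α x : ℝ) : ℝ :=
  2 * binEntropy x - (1 - α) * binEntropy ((x - α / 2) / (1 - α))

lemma fA_sub_binEnt_eq (α β : ℝ) : fA α β - binEnt β = α - entropyGap α β / log 2 := by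
  simp only [fA, entropyGap, binEnt_eq_binEntropy_div_log_two]
  ring

lemma entropyGap_one_sub {α : ℝ} (hα : α ≠ 1) (x : ℝ) :
    entropyGap α (1 - x) = entropyGap α x := by
  have h : (1 - x - α / 2) / (1 - α) = 1 - (x - α / 2) / (1 - α) := by
    field_simp [sub_ne_zero.2 hα.symm]
    ring
  rw [entropyGap, entropyGap, h, binEntropy_one_sub, binEntropy_one_sub]

lemma entropyGap_half {α : ℝ} (hα : α ≠ 1) : entropyGap α (1 / 2) = (1 + α) * log 2 := by
  have h : (1 / 2 - α / 2) / (1 - α) = 2⁻¹ := by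
    field_simp [sub_ne_zero.2 hα.symm]
  rw [entropyGap, h, one_div, binEntropy_two_inv]
  ring

lemma hasDerivAt_entropyGap {α x : ℝ} (hα0 : 0 ≤ α) (hα1 : α < 1)
    (hx : x ∈ Ioo (α / 2) (1 - α / 2)) :
    HasDerivAt (entropyGap α)
      (2 * (log (1 - x) - log x) - (log (1 - α / 2 - x) - log (x - α / 2))) x := by
  obtain ⟨hxl, hxu⟩ := hx
  have hα' : 0 < 1 - α := by linarith
  set t := (x - α / 2) / (1 - α) with ht
  have ht0 : 0 < t := div_pos (by linarith) hα'
  have ht1 : 0 < 1 - t := by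
    rw [ht, sub_pos, div_lt_one hα']
    linarith
  have hlog : log (1 - t) - log t = log (1 - α / 2 - x) - log (x - α / 2) := by
    have h1t : 1 - t = (1 - α / 2 - x) / (1 - α) := by
      rw [ht]
      field_simp
      ring
    rw [h1t, ht, log_div (by linarith) hα'.ne', log_div (by linarith) hα'.ne']
    ring
  have hinner : HasDerivAt (fun y => (y - α / 2) / (1 - α)) (1 / (1 - α)) x := by
    simpa using ((hasDerivAt_id x).sub_const (α / 2)).div_const (1 - α)
  have houter := (hasDerivAt_binEntropy ht0.ne' (sub_pos.1 ht1).ne).comp x hinner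
  have hx0 : 0 < x := by linarith
  have hx1 : x < 1 := by linarith
  refine (((hasDerivAt_binEntropy hx0.ne' hx1.ne).const_mul 2).sub
    (houter.const_mul (1 - α))).congr_deriv ?_
  rw [← hlog]
  field_simp

lemma sq_one_sub_mul_le_sq_mul {a x : ℝ} (ha : 1 / 4 ≤ a) (hx : x ≤ 1 / 2) :
    (1 - x) ^ 2 * (x - a) ≤ x ^ 2 * (1 - a - x) := by
  have h : 0 ≤ (1 / 2 - x) * ((x - 1 / 2) ^ 2 + (a - 1 / 4)) :=
    mul_nonneg (by linarith) (by positivity)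
  linear_combination 2 * h

lemma two_mul_log_odds_le {a x : ℝ} (ha : 1 / 4 ≤ a) (hax : a < x) (hx : x ≤ 1 / 2) :
    2 * (log (1 - x) - log x) ≤ log (1 - a - x) - log (x - a) := by
  have hx0 : 0 < x := by linarith
  have hx1 : 0 < 1 - x := by linarith
  have key := log_le_log (by positivity) (sq_one_sub_mul_le_sq_mul ha hx)
  rw [log_mul (by positivity) (by linarith), log_mul (by positivity) (by linarith),
    log_pow, log_pow] at key
  push_cast at key
  linarith

lemma antitoneOn_entropyGap {α : ℝ} (hα0 : 1 / 2 ≤ α) (hα1 : α < 1) :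
    AntitoneOn (entropyGap α) (Icc (α / 2) (1 / 2)) := by
  have hderiv : ∀ x ∈ interior (Icc (α / 2) (1 / 2)), HasDerivAt (entropyGap α)
      (2 * (log (1 - x) - log x) - (log (1 - α / 2 - x) - log (x - α / 2))) x := by
    rw [interior_Icc]
    exact fun x hx => hasDerivAt_entropyGap (by linarith) hα1 ⟨hx.1, by linarith [hx.2]⟩
  refine antitoneOn_of_deriv_nonpos (convex_Icc _ _) (by unfold entropyGap; fun_prop)
    (fun x hx => (hderiv x hx).differentiableAt.differentiableWithinAt) fun x hx => ?_
  rw [(hderiv x hx).deriv, sub_nonpos]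
  rw [interior_Icc] at hx
  exact two_mul_log_odds_le (by linarith) hx.1 hx.2.le

lemma entropyGap_half_le {α x : ℝ} (hα0 : 1 / 2 ≤ α) (hα1 : α < 1)
    (hx : x ∈ Icc (α / 2) (1 - α / 2)) : (1 + α) * log 2 ≤ entropyGap α x := by
  rw [← entropyGap_half hα1.ne]
  have hanti := antitoneOn_entropyGap hα0 hα1
  have hhalf : (1 : ℝ) / 2 ∈ Icc (α / 2) (1 / 2) := ⟨by linarith, le_rfl⟩
  rcases le_total x (1 / 2) with h | h
  · exact hanti ⟨hx.1, h⟩ hhalf h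
  · rw [← entropyGap_one_sub hα1.ne x]
    exact hanti ⟨by linarith [hx.2], by linarith⟩ hhalf (by linarith)

/-- For fixed `α ∈ [1/2, 1)`, the function `β ↦ f_A(α,β) − h(β)` on `[α/2, 1−α/2]`
attains its maximum at `β = 1/2` (where `h(1/2) = 1`). -/
theorem fA_sub_entropy_max_at_half (α : ℝ) (hα0 : 1 / 2 ≤ α) (hα1 : α < 1)
    (β : ℝ) (hβl : α / 2 ≤ β) (hβu : β ≤ 1 - α / 2) :
    fA α β - binEnt β ≤ fA α (1 / 2) - 1 := by
  have hhalf := fA_sub_binEnt_eq α (1 / 2)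
  rw [binEnt_half, entropyGap_half hα1.ne] at hhalf
  rw [fA_sub_binEnt_eq, hhalf]
  gcongr
  exact entropyGap_half_le hα0 hα1 ⟨hβl, hβu⟩
end

section
/- Let n, a, b be natural numbers with a even, a ≥ 2, a/2 ≤ b, and b + 1 ≤ n − a/2. If 2b + 1 < n, then C(n−b, a/2)·C(b, a/2) < C(n−b−1, a/2)·C(b+1, a/2); if 2b + 1 > n, then C(n−b, a/2)·C(b, a/2) > C(n−b−1, a/2)·C(b+1, a/2). Consequently, for fixed even a, the quantity C(n−b, a/2)·C(b, a/2) is increasing in b for 1 ≤ b ≤ n/2 and decreasing afterwards. -/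
/-- For even `a ≥ 2` with `a/2 ≤ b` and `b + 1 ≤ n − a/2`, the quantity
`C(n−b, a/2)·C(b, a/2)` strictly increases with `b` while `2b + 1 < n` and strictly
decreases when `2b + 1 > n`; consequently it is increasing in `b` for `1 ≤ b ≤ n/2` and
decreasing afterwards. -/
theorem choose_prod_unimodal (n a b : ℕ) (ha : Even a) (ha2 : 2 ≤ a)
    (hab : a / 2 ≤ b) (hbn : b + 1 ≤ n - a / 2) :
    (2 * b + 1 < n →
      (n - b).choose (a / 2) * b.choose (a / 2) <
        (n - b - 1).choose (a / 2) * (b + 1).choose (a / 2)) ∧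
    (2 * b + 1 > n →
      (n - b).choose (a / 2) * b.choose (a / 2) >
        (n - b - 1).choose (a / 2) * (b + 1).choose (a / 2)) := by
  obtain ⟨j, hj⟩ : ∃ j, a / 2 = j + 1 := ⟨a / 2 - 1, by omega⟩
  rw [hj] at hab hbn ⊢
  have hn : n - b = (n - b - 1) + 1 := by omega
  set m := n - b - 1 with hm
  have hmj : j + 1 ≤ m := by omega
  rw [hn, Nat.choose_succ_succ' m j, Nat.choose_succ_succ' b j]
  have h1 : m.choose (j+1) * (j+1) = m.choose j * (m - j) := Nat.choose_succ_right_eq m j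
  have h2 : b.choose (j+1) * (j+1) = b.choose j * (b - j) := Nat.choose_succ_right_eq b j
  have hcm : 0 < m.choose j := Nat.choose_pos (by omega)
  have hcb : 0 < b.choose j := Nat.choose_pos (by omega)
  constructor
  · intro h
    have hbm : b - j < m - j := by omega
    have key : m.choose j * b.choose (j+1) < m.choose (j+1) * b.choose j := by
      have step : (m.choose j * b.choose (j+1)) * (j+1) <
          (m.choose (j+1) * b.choose j) * (j+1) := by
        calc (m.choose j * b.choose (j+1)) * (j+1)
            = m.choose j * (b.choose j * (b - j)) := by rw [mul_assoc, h2]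
          _ < m.choose j * (m - j) * b.choose j := by
              nlinarith [mul_lt_mul_of_pos_left hbm (mul_pos hcm hcb)]
          _ = (m.choose (j+1) * b.choose j) * (j+1) := by
              rw [← h1]; ring
      exact Nat.lt_of_mul_lt_mul_right step
    nlinarith [key]
  · intro h
    have hbm : m - j < b - j := by omega
    have key : m.choose (j+1) * b.choose j < m.choose j * b.choose (j+1) := by
      have step : (m.choose (j+1) * b.choose j) * (j+1) <
          (m.choose j * b.choose (j+1)) * (j+1) := by
        calc (m.choose (j+1) * b.choose j) * (j+1)
            = m.choose j * (m - j) * b.choose j := by rw [← h1]; ring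
          _ < m.choose j * (b.choose j * (b - j)) := by
              nlinarith [mul_lt_mul_of_pos_left hbm (mul_pos hcm hcb)]
          _ = (m.choose j * b.choose (j+1)) * (j+1) := by rw [mul_assoc, h2]
      exact Nat.lt_of_mul_lt_mul_right step
    nlinarith [key]
end

section
/- Let n be even and let a be even with 2 ≤ a ≤ n/2. For every natural number b with (n−a)/2 ≤ b ≤ (n+a)/2, one has C(n−b, a/2)·C(b, a/2) ≥ C(n−b, (n−a)/2)·C(b, (n−a)/2). -/
open Finset

lemma choose_mul_prod_aux (m j k : ℕ) (hjk : j ≤ k) (hkm : k ≤ m) :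
    m.choose k * ∏ i ∈ Ico j k, (i + 1) = m.choose j * ∏ i ∈ Ico j k, (m - i) := by
  revert hkm
  induction k, hjk using Nat.le_induction with
  | base => intro _; simp
  | succ k hk ih =>
    intro hkm
    have h4 := ih (by omega)
    have h3 := Nat.choose_succ_right_eq m k
    rw [Finset.prod_Ico_succ_top hk, Finset.prod_Ico_succ_top hk]
    calc m.choose (k + 1) * ((∏ i ∈ Ico j k, (i + 1)) * (k + 1))
        = (m.choose (k + 1) * (k + 1)) * ∏ i ∈ Ico j k, (i + 1) := by ring
      _ = (m.choose k * (m - k)) * ∏ i ∈ Ico j k, (i + 1) := by rw [h3]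
      _ = (m.choose k * ∏ i ∈ Ico j k, (i + 1)) * (m - k) := by ring
      _ = (m.choose j * ∏ i ∈ Ico j k, (m - i)) * (m - k) := by rw [h4]
      _ = m.choose j * ((∏ i ∈ Ico j k, (m - i)) * (m - k)) := by ring

lemma prod_reflect_aux (j k : ℕ) :
    ∏ i ∈ Ico j k, (j + k - i) = ∏ i ∈ Ico j k, (i + 1) := by
  rw [prod_Ico_eq_prod_range, prod_Ico_eq_prod_range,
    ← Finset.prod_range_reflect (fun i => j + i + 1) (k - j)]
  apply Finset.prod_congr rfl
  intro i hi
  simp only [Finset.mem_range] at hi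
  omega

lemma nat_amgm (x y s : ℕ) (h : x + y = 2 * s) : x * y ≤ s * s := by
  zify
  nlinarith [sq_nonneg ((x : ℤ) - y)]

lemma key_choose (m b j k : ℕ) (hjk : j ≤ k) (hkm : k ≤ m) (hkb : k ≤ b)
    (hsum : m + b = 2 * (j + k)) :
    m.choose k * b.choose k ≤ m.choose j * b.choose j := by
  set P := ∏ i ∈ Ico j k, (i + 1) with hP
  have hPpos : 0 < P := Finset.prod_pos (fun i _ => Nat.succ_pos i)
  have h1 := choose_mul_prod_aux m j k hjk hkm
  have h2 := choose_mul_prod_aux b j k hjk hkb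
  have hprod : (∏ i ∈ Ico j k, (m - i)) * (∏ i ∈ Ico j k, (b - i)) ≤ P * P := by
    have hPP : P * P = ∏ i ∈ Ico j k, (j + k - i) * (j + k - i) := by
      rw [Finset.prod_mul_distrib, prod_reflect_aux]
    rw [hPP, ← Finset.prod_mul_distrib]
    apply Finset.prod_le_prod
    · intro i _; exact Nat.zero_le _
    · intro i hi
      simp only [Finset.mem_Ico] at hi
      exact nat_amgm _ _ _ (by omega)
  have hchain : (m.choose k * b.choose k) * (P * P) ≤ (m.choose j * b.choose j) * (P * P) := by
    calc (m.choose k * b.choose k) * (P * P)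
        = (m.choose k * P) * (b.choose k * P) := by ring
      _ = (m.choose j * ∏ i ∈ Ico j k, (m - i)) * (b.choose j * ∏ i ∈ Ico j k, (b - i)) := by
          rw [h1, h2]
      _ = (m.choose j * b.choose j) *
            ((∏ i ∈ Ico j k, (m - i)) * (∏ i ∈ Ico j k, (b - i))) := by ring
      _ ≤ (m.choose j * b.choose j) * (P * P) := Nat.mul_le_mul_left _ hprod
  exact Nat.le_of_mul_le_mul_right hchain (by positivity)

/-- For even `n`, even `a` with `2 ≤ a ≤ n/2`, and `(n−a)/2 ≤ b ≤ (n+a)/2`: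
`C(n−b, a/2)·C(b, a/2) ≥ C(n−b, (n−a)/2)·C(b, (n−a)/2)`. -/
theorem choose_prod_ge_complement (n a b : ℕ) (hn : Even n) (ha : Even a)
    (ha2 : 2 ≤ a) (han : a ≤ n / 2) (hbl : (n - a) / 2 ≤ b) (hbu : b ≤ (n + a) / 2) :
    (n - b).choose ((n - a) / 2) * b.choose ((n - a) / 2) ≤
      (n - b).choose (a / 2) * b.choose (a / 2) := by
  obtain ⟨p, hp⟩ := hn
  obtain ⟨q, hq⟩ := ha
  exact key_choose (n - b) b (a / 2) ((n - a) / 2) (by omega) (by omega) (by omega) (by omega)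
end

section
/- Let n, a, b be natural numbers with b even, b ≥ 2, and b/2 ≤ a ≤ n − b/2. Then C(n−a, b/2)·C(a, b/2) ≤ (1/(π·b)) · (2e·√(a·n) / b)^b, where e is Euler's number and π is pi. Equivalently, p_D'(a,b) := C(n−a, b/2)·C(a, b/2)/C(n,a) ≤ (2e√(an)/b)^b / (π·b·C(n,a)). -/
/-!
Bound each factor by `C(m, k) ≤ m^k / k!` and Stirling's lower bound `k! ≥ √(2πk) (k/e)^k`, i.e.
`C(m, k) ≤ (e m / k)^k / √(2πk)`. Multiplying the two bounds with `k = b/2` and using `n - a ≤ n`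
gives `(e² a n / k²)^k / (2πk)`, which is the right-hand side rewritten with `b = 2k`.
-/

open Real

theorem Nat.choose_le_exp_mul_div_pow_div_sqrt (m : ℕ) {k : ℕ} (hk : k ≠ 0) :
    (m.choose k : ℝ) ≤ (exp 1 * m / k) ^ k / √(2 * π * k) := by
  calc (m.choose k : ℝ) ≤ (m : ℝ) ^ k / k.factorial := Nat.choose_le_pow_div k m
    _ ≤ (m : ℝ) ^ k / (√(2 * π * k) * (k / exp 1) ^ k) := by
        gcongr
        exact Stirling.le_factorial_stirling k
    _ = (exp 1 * m / k) ^ k / √(2 * π * k) := by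
        rw [mul_comm, ← div_div, ← div_pow]
        congr 2
        field_simp

theorem Nat.choose_mul_choose_le (m₁ m₂ : ℕ) {k : ℕ} (hk : k ≠ 0) :
    (m₁.choose k * m₂.choose k : ℝ) ≤ (exp 1 ^ 2 * m₁ * m₂ / k ^ 2) ^ k / (2 * π * k) := by
  calc (m₁.choose k * m₂.choose k : ℝ)
      ≤ (exp 1 * m₁ / k) ^ k / √(2 * π * k) * ((exp 1 * m₂ / k) ^ k / √(2 * π * k)) := by
        gcongr <;> exact choose_le_exp_mul_div_pow_div_sqrt _ hk
    _ = (exp 1 ^ 2 * m₁ * m₂ / k ^ 2) ^ k / (2 * π * k) := by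
        rw [_root_.div_mul_div_comm, ← mul_pow, mul_self_sqrt (by positivity)]
        ring

theorem choose_prod_le_exp_bound_general (n a b : ℕ) (hb : Even b) (hb2 : 2 ≤ b) :
    ((n - a).choose (b / 2) * a.choose (b / 2) : ℝ) ≤
      (1 / (Real.pi * b)) * (2 * Real.exp 1 * Real.sqrt ((a : ℝ) * n) / b) ^ b := by
  obtain ⟨k, rfl⟩ := hb.two_dvd
  have hk : k ≠ 0 := by omega
  have hsqrt : √((a : ℝ) * n) ^ 2 = a * n := sq_sqrt (by positivity)
  calc ((n - a).choose (2 * k / 2) * a.choose (2 * k / 2) : ℝ)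
      ≤ (exp 1 ^ 2 * (n - a : ℕ) * a / k ^ 2) ^ k / (2 * π * k) := by
        rw [Nat.mul_div_cancel_left k two_pos]
        exact Nat.choose_mul_choose_le _ _ hk
    _ ≤ (exp 1 ^ 2 * n * a / k ^ 2) ^ k / (2 * π * k) := by
        gcongr
        exact_mod_cast n.sub_le a
    _ = 1 / (π * (2 * k : ℕ)) * (2 * exp 1 * √((a : ℝ) * n) / (2 * k : ℕ)) ^ (2 * k) := by
        rw [pow_mul, div_pow _ _ 2, mul_pow _ _ 2, hsqrt]
        push_cast
        field_simp

/-- For even `b ≥ 2` with `b/2 ≤ a ≤ n − b/2`: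
`C(n−a, b/2)·C(a, b/2) ≤ (1/(π·b))·(2e·√(a·n)/b)^b`. -/
theorem choose_prod_le_exp_bound (n a b : ℕ) (hb : Even b) (hb2 : 2 ≤ b)
    (hba : b / 2 ≤ a) (han : a ≤ n - b / 2) :
    ((n - a).choose (b / 2) * a.choose (b / 2) : ℝ) ≤
      (1 / (Real.pi * b)) * (2 * Real.exp 1 * Real.sqrt ((a : ℝ) * n) / b) ^ b :=
  choose_prod_le_exp_bound_general n a b hb hb2
end
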